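/- Let σ : ℝ → ℝ be a continuous injective map with continuous inverse onto its range, taking values in (0, ∞) (a bicontinuous bijection onto the positive reals). Let g, g̃ : (Fin p → ℝ) → (Fin d → ℝ) be measurable, let γ_p be the standard Gaussian measure on ℝ^p, and define f(u) j = σ(g(u) j) and f̃(u) j = σ(g̃(u) j). If the Poisson compound of the law of f under γ_p equals the Poisson compound of the law of f̃ under γ_p (as measures on Fin d → ℕ), then the law of f under γ_p equals the law of f̃ under γ_p, and moreover the law of g under γ_p equals the law of g̃ under γ_p. -/

import Mathlib

open MeasureTheory ProbabilityTheory

/-- The standard Gaussian measure on `EuclideanSpace ℝ (Fin d)`. -/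
noncomputable def stdGaussian (d : ℕ) : Measure (Fin d → ℝ) :=
  Measure.pi fun _ => gaussianReal 0 1

/-- Poisson compound of a measure `ν` on `Fin d → ℝ`: conditionally on `y ~ ν`, the
coordinates are independent Poisson variables with rates `y j`. -/
noncomputable def poissonCompound (d : ℕ) (ν : Measure (Fin d → ℝ)) : Measure (Fin d → ℕ) :=
  ν.bind (fun y => Measure.pi (fun j => (poissonPMF (Real.toNNReal (y j))).toMeasure))

/-!
The mass that the Poisson compound of `ν` puts on `k` is `∫ ∏ j, y_j ^ k_j e^(-y_j) / k_j! dν`,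
so equal compounds have equal tilted moments `M(c, k) = ∫ ∏ j, y_j ^ k_j e^(-c_j y_j) dν` at
`c = 1`. Expanding `e^((c_j - a) y_j)` in powers of `y_j` shows that the family `M(c, ·)`
determines `M(c', ·)` when `c'` differs from `c` only in a coordinate `j` with
`0 < c'_j < 2 c_j`; finitely many such moves reach every `c > 0`, and continuity then gives the
Laplace transform `M(c, 0)` on the closed orthant. At integer rates these are the moments of the
image of `ν` under `y ↦ e^(-y)` in the unit cube, which Stone–Weierstrass shows to determine that
image, and `y ↦ e^(-y)` is injective. Finally `v ↦ σ ∘ v` is a continuous injection of a Polish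
space, hence a measurable embedding, so the law of `g` is recovered from that of `σ ∘ g`.
-/

open Filter Topology Function
open scoped Nat NNReal

variable {ι : Type*} [Fintype ι]

lemma pow_mul_exp_neg_mul_le {c y : ℝ} (hc : 0 < c) (hy : 0 ≤ y) (k : ℕ) :
    y ^ k * Real.exp (-(c * y)) ≤ k ! / c ^ k := by
  have h := Real.pow_div_factorial_le_exp _ (mul_nonneg hc.le hy) k
  rw [div_le_iff₀ (by positivity), mul_pow] at h
  rw [le_div_iff₀ (by positivity), Real.exp_neg]
  calc y ^ k * (Real.exp (c * y))⁻¹ * c ^ k = (c ^ k * y ^ k) * (Real.exp (c * y))⁻¹ := by ring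
    _ ≤ (Real.exp (c * y) * k !) * (Real.exp (c * y))⁻¹ := by gcongr
    _ = k ! := by field_simp

lemma hasSum_mul_pow_div_factorial (r x : ℝ) :
    HasSum (fun m : ℕ => r * (x ^ m / m !)) (r * Real.exp x) := by
  simpa only [Real.exp_eq_exp_ℝ] using (NormedSpace.expSeries_div_hasSum_exp x).mul_left r

lemma forall_pos_of_forall_lt_two_mul {P : ℝ → Prop} {a₀ : ℝ} (ha₀ : 0 < a₀) (h₀ : P a₀)
    (step : ∀ a, P a → ∀ b, 0 < b → b < 2 * a → P b) {b : ℝ} (hb : 0 < b) : P b := by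
  have climb : ∀ n : ℕ, ∀ b, 0 < b → b ≤ (3 / 2) ^ n * a₀ → P b := by
    intro n
    induction n with
    | zero => exact fun b hb hle => step a₀ h₀ b hb (by linarith)
    | succ n ih =>
      intro b hb hle
      refine step (2 / 3 * b) (ih _ (by positivity) ?_) b hb (by linarith)
      rw [pow_succ] at hle
      linarith
  obtain ⟨n, hn⟩ := pow_unbounded_of_one_lt (b / a₀) (by norm_num : (1 : ℝ) < 3 / 2)
  exact climb n b hb ((div_le_iff₀ ha₀).mp hn.le)

theorem continuous_integral_continuousMap {X : Type*} [TopologicalSpace X] [CompactSpace X]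
    [MeasurableSpace X] [BorelSpace X] (μ : Measure X) [IsFiniteMeasure μ] :
    Continuous fun f : C(X, ℝ) => ∫ x, f x ∂μ := by
  have h : (fun f : C(X, ℝ) => ∫ x, f x ∂μ)
      = fun f => ∫ x, ContinuousMap.toLp (E := ℝ) 1 μ ℝ f x ∂μ :=
    funext fun f => integral_congr_ae (ContinuousMap.coeFn_toLp μ f).symm
  rw [h]
  exact MeasureTheory.continuous_integral.comp (ContinuousMap.toLp 1 μ ℝ).continuous

theorem ext_of_integral_monomial_eq {K : Set ℝ} [CompactSpace K] {ρ ρ' : Measure (ι → K)}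
    [IsFiniteMeasure ρ] [IsFiniteMeasure ρ']
    (h : ∀ k : ι → ℕ, ∫ x, ∏ i, (x i : ℝ) ^ k i ∂ρ = ∫ x, ∏ i, (x i : ℝ) ^ k i ∂ρ') :
    ρ = ρ' := by
  let coord : ι → C(ι → K, ℝ) := fun i => ⟨fun x => x i, by fun_prop⟩
  let A := (MvPolynomial.aeval (R := ℝ) coord).range
  have hsep : A.SeparatesPoints := by
    intro x y hxy
    obtain ⟨i, hi⟩ := Function.ne_iff.mp hxy
    exact ⟨coord i, ⟨coord i, ⟨MvPolynomial.X i, MvPolynomial.aeval_X _ _⟩, rfl⟩,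
      fun hc => hi (Subtype.ext hc)⟩
  have hA : ∀ f ∈ A, ∫ x, f x ∂ρ = ∫ x, f x ∂ρ' := by
    rintro _ ⟨P, rfl⟩
    have heval : ∀ x, MvPolynomial.aeval coord P x = MvPolynomial.eval (fun i => (x i : ℝ)) P := by
      intro x
      induction P using MvPolynomial.induction_on <;> simp_all [coord]
    have hint : ∀ (μ : Measure (ι → K)) [IsFiniteMeasure μ] (k : ι →₀ ℕ),
        Integrable (fun x => ∏ i, (x i : ℝ) ^ k i) μ := fun μ _ k =>
      (by fun_prop : Continuous _).integrable_of_hasCompactSupport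
        (HasCompactSupport.of_compactSpace _)
    simp only [AlgHom.toRingHom_eq_coe, RingHom.coe_coe, heval, MvPolynomial.eval_eq']
    rw [integral_finsetSum _ fun k _ => (hint ρ k).const_mul _,
      integral_finsetSum _ fun k _ => (hint ρ' k).const_mul _]
    simp only [integral_const_mul, h]
  have hclosed : IsClosed {f : C(ι → K, ℝ) | ∫ x, f x ∂ρ = ∫ x, f x ∂ρ'} :=
    isClosed_eq (continuous_integral_continuousMap ρ) (continuous_integral_continuousMap ρ')
  refine ext_of_forall_integral_eq_of_IsFiniteMeasure fun f => ?_
  have hf : f.toContinuousMap ∈ A.topologicalClosure := by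
    rw [ContinuousMap.subalgebra_topologicalClosure_eq_top_of_separatesPoints A hsep]
    trivial
  exact closure_minimal hA hclosed hf

noncomputable def tiltedMonomial (c : ι → ℝ) (k : ι → ℕ) (y : ι → ℝ) : ℝ :=
  ∏ j, y j ^ k j * Real.exp (-(c j * y j))

noncomputable def tiltedMoment (ν : Measure (ι → ℝ)) (c : ι → ℝ) (k : ι → ℕ) : ℝ :=
  ∫ y, tiltedMonomial c k y ∂ν

lemma tiltedMonomial_nonneg (c : ι → ℝ) (k : ι → ℕ) {y : ι → ℝ} (hy : ∀ j, 0 ≤ y j) :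
    0 ≤ tiltedMonomial c k y :=
  Finset.prod_nonneg fun j _ => by have := hy j; positivity

lemma tiltedMonomial_le {c : ι → ℝ} (hc : ∀ j, 0 < c j) (k : ι → ℕ) {y : ι → ℝ}
    (hy : ∀ j, 0 ≤ y j) : tiltedMonomial c k y ≤ ∏ j, ((k j)! / c j ^ k j : ℝ) :=
  Finset.prod_le_prod (fun j _ => by have := hy j; positivity)
    fun j _ => pow_mul_exp_neg_mul_le (hc j) (hy j) (k j)

@[fun_prop]
lemma continuous_tiltedMonomial (c : ι → ℝ) (k : ι → ℕ) : Continuous (tiltedMonomial c k) := by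
  unfold tiltedMonomial; fun_prop

variable {ν ν' : Measure (ι → ℝ)}

lemma integrable_tiltedMonomial [IsFiniteMeasure ν] (hν : ∀ᵐ y ∂ν, ∀ j, 0 ≤ y j)
    {c : ι → ℝ} (hc : ∀ j, 0 < c j) (k : ι → ℕ) :
    Integrable (tiltedMonomial c k) ν := by
  refine (integrable_const (∏ j, ((k j)! / c j ^ k j : ℝ))).mono'
    (continuous_tiltedMonomial c k).aestronglyMeasurable ?_
  filter_upwards [hν] with y hy
  rw [Real.norm_of_nonneg (tiltedMonomial_nonneg c k hy)]
  exact tiltedMonomial_le hc k hy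

section Update

variable [DecidableEq ι]

lemma prod_eq_prod_mul_of_eq_mul {f g : ι → ℝ} {j : ι} {r : ℝ} (hj : f j = g j * r)
    (hne : ∀ i ≠ j, f i = g i) : ∏ i, f i = (∏ i, g i) * r := by
  rw [← Fintype.prod_pi_mulSingle' j r, ← Finset.prod_mul_distrib]
  refine Finset.prod_congr rfl fun i _ => ?_
  rcases eq_or_ne i j with rfl | hi
  · simp [hj]
  · simp [hne i hi, Pi.mulSingle_eq_of_ne hi]

lemma tiltedMonomial_update_exponent (c : ι → ℝ) (k : ι → ℕ) (j : ι) (m : ℕ) (y : ι → ℝ) :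
    tiltedMonomial c (update k j (k j + m)) y = tiltedMonomial c k y * y j ^ m :=
  prod_eq_prod_mul_of_eq_mul (j := j) (by rw [update_self, pow_add]; ring)
    fun i hi => by rw [update_of_ne hi]

lemma tiltedMonomial_update_rate (c : ι → ℝ) (k : ι → ℕ) (j : ι) (a : ℝ) (y : ι → ℝ) :
    tiltedMonomial (update c j a) k y = tiltedMonomial c k y * Real.exp ((c j - a) * y j) :=
  prod_eq_prod_mul_of_eq_mul
    (j := j) (by rw [update_self, mul_assoc, ← Real.exp_add]; ring_nf)
    fun i hi => by rw [update_of_ne hi]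

theorem hasSum_tiltedMoment_update [IsFiniteMeasure ν] (hν : ∀ᵐ y ∂ν, ∀ j, 0 ≤ y j)
    {c : ι → ℝ} (hc : ∀ j, 0 < c j) (k : ι → ℕ) (j : ι) {a : ℝ} (ha : |c j - a| < c j) :
    HasSum (fun m : ℕ => (c j - a) ^ m / m ! * tiltedMoment ν c (update k j (k j + m)))
      (tiltedMoment ν (update c j a) k) := by
  set δ := c j - a
  have hF : ∀ m : ℕ, δ ^ m / m ! * tiltedMoment ν c (update k j (k j + m))
      = ∫ y, tiltedMonomial c k y * ((δ * y j) ^ m / m !) ∂ν := by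
    intro m
    rw [tiltedMoment, ← integral_const_mul]
    congr 1 with y
    rw [tiltedMonomial_update_exponent, mul_pow]
    ring
  have hf : tiltedMoment ν (update c j a) k
      = ∫ y, tiltedMonomial c k y * Real.exp (δ * y j) ∂ν := by
    rw [tiltedMoment]
    congr 1 with y
    rw [tiltedMonomial_update_rate]
  rw [funext hF, hf]
  -- The series is dominated by that of `exp (|δ| * y j)`, integrable as `|δ| < c j`.
  refine hasSum_integral_of_dominated_convergence
    (fun m y => tiltedMonomial c k y * ((|δ| * y j) ^ m / m !))
    (fun m => (by fun_prop : Continuous _).aestronglyMeasurable) (fun m => ?_)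
    (ae_of_all _ fun y => (hasSum_mul_pow_div_factorial _ _).summable) ?_
    (ae_of_all _ fun y => hasSum_mul_pow_div_factorial _ _)
  · filter_upwards [hν] with y hy
    rw [norm_mul, Real.norm_of_nonneg (tiltedMonomial_nonneg c k hy), norm_div, norm_pow,
      Real.norm_eq_abs, abs_mul, abs_of_nonneg (hy j), Real.norm_natCast]
  · have hc' : ∀ i, 0 < update c j (c j - |δ|) i :=
      (forall_update_iff c fun _ r => 0 < r).mpr ⟨sub_pos.mpr ha, fun i _ => hc i⟩
    simp_rw [(hasSum_mul_pow_div_factorial _ _).tsum_eq]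
    refine (integrable_tiltedMonomial hν hc' k).congr (ae_of_all _ fun y => ?_)
    simp only [tiltedMonomial_update_rate, sub_sub_cancel]

theorem tiltedMoment_update_eq_of_eq [IsFiniteMeasure ν] [IsFiniteMeasure ν']
    (hν : ∀ᵐ y ∂ν, ∀ j, 0 ≤ y j) (hν' : ∀ᵐ y ∂ν', ∀ j, 0 ≤ y j) {c : ι → ℝ}
    (hc : ∀ j, 0 < c j) (h : ∀ k, tiltedMoment ν c k = tiltedMoment ν' c k) (j : ι) {a : ℝ}
    (ha : |c j - a| < c j) (k : ι → ℕ) :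
    tiltedMoment ν (update c j a) k = tiltedMoment ν' (update c j a) k :=
  (hasSum_tiltedMoment_update hν hc k j ha).unique <| by
    simpa only [h] using hasSum_tiltedMoment_update hν' hc k j ha

theorem tiltedMoment_update_eq_of_eq_of_pos [IsFiniteMeasure ν] [IsFiniteMeasure ν']
    (hν : ∀ᵐ y ∂ν, ∀ j, 0 ≤ y j) (hν' : ∀ᵐ y ∂ν', ∀ j, 0 ≤ y j) {c : ι → ℝ}
    (hc : ∀ j, 0 < c j) (h : ∀ k, tiltedMoment ν c k = tiltedMoment ν' c k) (j : ι) {a : ℝ}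
    (ha : 0 < a) (k : ι → ℕ) :
    tiltedMoment ν (update c j a) k = tiltedMoment ν' (update c j a) k := by
  refine forall_pos_of_forall_lt_two_mul (P := fun a => ∀ k,
    tiltedMoment ν (update c j a) k = tiltedMoment ν' (update c j a) k) (hc j)
    (by simpa using h) (fun a ha' b hb hba => ?_) ha k
  have hc' : ∀ i, 0 < update c j a i :=
    (forall_update_iff c fun _ r => 0 < r).mpr ⟨by linarith, fun i _ => hc i⟩
  have hb : |update c j a j - b| < update c j a j := by
    rw [update_self, abs_lt]; constructor <;> linarith
  simpa using tiltedMoment_update_eq_of_eq hν hν' hc' ha' j hb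

end Update

theorem tiltedMoment_eq_of_eq_one [IsFiniteMeasure ν] [IsFiniteMeasure ν']
    (hν : ∀ᵐ y ∂ν, ∀ j, 0 ≤ y j) (hν' : ∀ᵐ y ∂ν', ∀ j, 0 ≤ y j)
    (h : ∀ k, tiltedMoment ν 1 k = tiltedMoment ν' 1 k) {c : ι → ℝ} (hc : ∀ j, 0 < c j)
    (k : ι → ℕ) : tiltedMoment ν c k = tiltedMoment ν' c k := by
  classical
  suffices ∀ s : Finset ι, ∀ k, tiltedMoment ν (s.piecewise c 1) k
      = tiltedMoment ν' (s.piecewise c 1) k by simpa using this Finset.univ k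
  intro s
  induction s using Finset.induction_on with
  | empty => simpa using h
  | insert j s _ ih =>
    rw [Finset.piecewise_insert]
    refine tiltedMoment_update_eq_of_eq_of_pos hν hν' (fun i => ?_) ih j (hc j)
    by_cases hi : i ∈ s <;> simp [hi, hc i]

theorem continuousOn_tiltedMoment_zero [IsFiniteMeasure ν] (hν : ∀ᵐ y ∂ν, ∀ j, 0 ≤ y j) :
    ContinuousOn (fun c => tiltedMoment ν c 0) (Set.univ.pi fun _ => Set.Ici 0) := by
  refine continuousOn_of_dominated (bound := fun _ => 1)
    (fun c _ => (continuous_tiltedMonomial c 0).aestronglyMeasurable) (fun c hc => ?_)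
    (integrable_const 1) (ae_of_all _ fun y => by unfold tiltedMonomial; fun_prop)
  filter_upwards [hν] with y hy
  rw [Real.norm_of_nonneg (tiltedMonomial_nonneg c 0 hy)]
  simp only [tiltedMonomial, Pi.zero_apply, pow_zero, one_mul]
  refine Finset.prod_le_one (fun j _ => by positivity) fun j _ => ?_
  simpa using mul_nonneg (Set.mem_univ_pi.mp hc j) (hy j)

theorem tiltedMoment_zero_eq_of_forall_pos [IsFiniteMeasure ν] [IsFiniteMeasure ν']
    (hν : ∀ᵐ y ∂ν, ∀ j, 0 ≤ y j) (hν' : ∀ᵐ y ∂ν', ∀ j, 0 ≤ y j)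
    (h : ∀ c : ι → ℝ, (∀ j, 0 < c j) → tiltedMoment ν c 0 = tiltedMoment ν' c 0)
    {c : ι → ℝ} (hc : ∀ j, 0 ≤ c j) : tiltedMoment ν c 0 = tiltedMoment ν' c 0 := by
  refine Set.EqOn.of_subset_closure (s := Set.univ.pi fun _ => Set.Ioi 0)
    (fun c hc => h c (Set.mem_univ_pi.mp hc)) (continuousOn_tiltedMoment_zero hν)
    (continuousOn_tiltedMoment_zero hν')
    (Set.pi_mono fun _ _ => Set.Ioi_subset_Ici_self) ?_ (Set.mem_univ_pi.mpr hc)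
  simp [closure_pi_set]

theorem ext_of_tiltedMoment_nat_eq [IsFiniteMeasure ν] [IsFiniteMeasure ν']
    (hν : ∀ᵐ y ∂ν, ∀ j, 0 ≤ y j) (hν' : ∀ᵐ y ∂ν', ∀ j, 0 ≤ y j)
    (h : ∀ k : ι → ℕ, tiltedMoment ν (fun j => k j) 0 = tiltedMoment ν' (fun j => k j) 0) :
    ν = ν' := by
  let toCube : (ι → ℝ) → (ι → unitInterval) :=
    fun y i => Set.projIcc 0 1 zero_le_one (Real.exp (-y i))
  let ofCube : (ι → unitInterval) → (ι → ℝ) := fun x i => -Real.log (x i)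
  have htoCube : Measurable toCube := by fun_prop
  have hcube : ∀ y : ι → ℝ, (∀ j, 0 ≤ y j) → ∀ i, (toCube y i : ℝ) = Real.exp (-y i) :=
    fun y hy i => congrArg Subtype.val <| Set.projIcc_of_mem _
      ⟨(Real.exp_pos _).le, Real.exp_le_one_iff.mpr (neg_nonpos.mpr (hy i))⟩
  have hmoment : ∀ μ : Measure (ι → ℝ), (∀ᵐ y ∂μ, ∀ j, 0 ≤ y j) → ∀ k : ι → ℕ,
      ∫ x, ∏ i, (x i : ℝ) ^ k i ∂μ.map toCube = tiltedMoment μ (fun j => k j) 0 := by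
    intro μ hμ k
    rw [integral_map htoCube.aemeasurable (by fun_prop : Continuous _).aestronglyMeasurable,
      tiltedMoment]
    refine integral_congr_ae ?_
    filter_upwards [hμ] with y hy
    refine Finset.prod_congr rfl fun i _ => ?_
    rw [hcube y hy, ← Real.exp_nat_mul]
    simp [mul_comm]
  have hinv : ∀ μ : Measure (ι → ℝ), (∀ᵐ y ∂μ, ∀ j, 0 ≤ y j) → (μ.map toCube).map ofCube = μ := by
    intro μ hμ
    rw [Measure.map_map (by fun_prop) htoCube]
    refine (Measure.map_congr ?_).trans Measure.map_id
    filter_upwards [hμ] with y hy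
    funext i
    simp [ofCube, hcube y hy]
  rw [← hinv ν hν, ← hinv ν' hν']
  congr 1
  exact ext_of_integral_monomial_eq fun k => by rw [hmoment ν hν, hmoment ν' hν', h]

set_option linter.deprecated false in
lemma toMeasure_poissonPMF (r : ℝ≥0) : (poissonPMF r).toMeasure = poissonMeasure r :=
  Measure.ext_of_singleton fun n => by
    rw [PMF.toMeasure_apply_singleton _ _ (measurableSet_singleton n), poissonMeasure_singleton]
    rfl

lemma pi_poissonMeasure_singleton (y : ι → ℝ) (k : ι → ℕ) :
    Measure.pi (fun j => poissonMeasure (y j).toNNReal) {k}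
      = ∏ j, ENNReal.ofReal (Real.exp (-(y j).toNNReal) * (y j).toNNReal ^ k j / (k j)!) := by
  rw [← Set.univ_pi_singleton, Measure.pi_pi]
  simp only [poissonMeasure_singleton]

lemma measurable_pi_poissonMeasure :
    Measurable fun y : ι → ℝ => Measure.pi fun j => poissonMeasure (y j).toNNReal := by
  refine Measure.measurable_of_measurable_coe _ fun s hs => ?_
  simp_rw [← Measure.tsum_indicator_apply_singleton _ s hs, pi_poissonMeasure_singleton]
  refine Measurable.tsum fun k => ?_
  by_cases hk : k ∈ s
  · simp only [Set.indicator_of_mem hk]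
    fun_prop
  · simp [hk]

theorem poissonCompound_singleton {d : ℕ} {ν : Measure (Fin d → ℝ)} [IsFiniteMeasure ν]
    (hν : ∀ᵐ y ∂ν, ∀ j, 0 ≤ y j) (k : Fin d → ℕ) :
    poissonCompound d ν {k} = ENNReal.ofReal (tiltedMoment ν 1 k / ∏ j, ((k j)! : ℝ)) := by
  have hint := (integrable_tiltedMonomial hν (c := 1) (fun _ => one_pos) k).div_const
    (∏ j, ((k j)! : ℝ))
  simp_rw [poissonCompound, toMeasure_poissonPMF]
  rw [Measure.bind_apply (measurableSet_singleton k) measurable_pi_poissonMeasure.aemeasurable,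
    tiltedMoment, ← integral_div, ofReal_integral_eq_lintegral_ofReal hint ?nonneg]
  case nonneg =>
    filter_upwards [hν] with y hy
    exact div_nonneg (tiltedMonomial_nonneg 1 k hy) (by positivity)
  refine lintegral_congr_ae ?_
  filter_upwards [hν] with y hy
  rw [pi_poissonMeasure_singleton, tiltedMonomial, ← Finset.prod_div_distrib,
    ENNReal.ofReal_prod_of_nonneg fun j _ => div_nonneg (by have := hy j; positivity)
      (by positivity)]
  refine Finset.prod_congr rfl fun j _ => ?_
  rw [Real.coe_toNNReal _ (hy j), Pi.one_apply, one_mul]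
  congr 1
  ring

theorem tiltedMoment_one_eq_of_poissonCompound_eq {d : ℕ} {ν ν' : Measure (Fin d → ℝ)}
    [IsFiniteMeasure ν] [IsFiniteMeasure ν'] (hν : ∀ᵐ y ∂ν, ∀ j, 0 ≤ y j)
    (hν' : ∀ᵐ y ∂ν', ∀ j, 0 ≤ y j) (h : poissonCompound d ν = poissonCompound d ν')
    (k : Fin d → ℕ) : tiltedMoment ν 1 k = tiltedMoment ν' 1 k := by
  have hk := congrArg (· {k}) h
  have hnonneg : ∀ μ : Measure (Fin d → ℝ), (∀ᵐ y ∂μ, ∀ j, 0 ≤ y j) →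
      0 ≤ tiltedMoment μ 1 k / ∏ j, ((k j)! : ℝ) := fun μ hμ =>
    div_nonneg (integral_nonneg_of_ae (hμ.mono fun y hy => tiltedMonomial_nonneg 1 k hy))
      (by positivity)
  simp only [poissonCompound_singleton hν, poissonCompound_singleton hν'] at hk
  rwa [ENNReal.ofReal_eq_ofReal_iff (hnonneg ν hν) (hnonneg ν' hν'),
    div_left_inj' (by positivity)] at hk

theorem eq_of_poissonCompound_eq {d : ℕ} {ν ν' : Measure (Fin d → ℝ)}
    [IsFiniteMeasure ν] [IsFiniteMeasure ν'] (hν : ∀ᵐ y ∂ν, ∀ j, 0 ≤ y j)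
    (hν' : ∀ᵐ y ∂ν', ∀ j, 0 ≤ y j) (h : poissonCompound d ν = poissonCompound d ν') :
    ν = ν' :=
  ext_of_tiltedMoment_nat_eq hν hν' fun k =>
    tiltedMoment_zero_eq_of_forall_pos hν hν'
      (fun _ hc => tiltedMoment_eq_of_eq_one hν hν'
        (tiltedMoment_one_eq_of_poissonCompound_eq hν hν' h) hc 0)
      fun j => Nat.cast_nonneg (k j)

/-- Reduction from Poisson observational noise to the noiseless setting: if
`σ : ℝ → ℝ` is a bicontinuous bijection onto `(0, ∞)` and the Poisson compounds of the
laws of `f = σ ∘ g` and `f̃ = σ ∘ g̃` (under the standard Gaussian) agree, then the laws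
of `f` and `f̃` agree, and the laws of `g` and `g̃` agree. -/
theorem poisson_noise_reduction_to_noiseless
    (p d : ℕ) (σ : ℝ → ℝ)
    (hσ : Topology.IsEmbedding σ) (hσrange : Set.range σ = Set.Ioi (0 : ℝ))
    (g g' : (Fin p → ℝ) → (Fin d → ℝ)) (hg : Measurable g) (hg' : Measurable g')
    (h : poissonCompound d (Measure.map (fun u => fun j => σ (g u j)) (stdGaussian p))
        = poissonCompound d (Measure.map (fun u => fun j => σ (g' u j)) (stdGaussian p))) :
    Measure.map (fun u => fun j => σ (g u j)) (stdGaussian p)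
        = Measure.map (fun u => fun j => σ (g' u j)) (stdGaussian p)
      ∧ Measure.map g (stdGaussian p) = Measure.map g' (stdGaussian p) := by
  have : IsProbabilityMeasure (_root_.stdGaussian p) := by
    unfold _root_.stdGaussian; infer_instance
  have hσc := hσ.continuous
  let lift : (Fin d → ℝ) → (Fin d → ℝ) := fun v j => σ (v j)
  have hlift : MeasurableEmbedding lift :=
    (by fun_prop : Continuous lift).measurableEmbedding
      fun v w hvw => funext fun j => hσ.injective (congrFun hvw j)
  have hnonneg : ∀ f : (Fin p → ℝ) → (Fin d → ℝ), Measurable f →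
      ∀ᵐ y ∂(stdGaussian p).map (lift ∘ f), ∀ j, 0 ≤ y j := fun f hf =>
    (ae_map_iff (hlift.measurable.comp hf).aemeasurable (by measurability)).mpr <| ae_of_all _
      fun u j => (hσrange ▸ Set.mem_range_self (f u j) : σ (f u j) ∈ Set.Ioi 0).le
  have hlaw := eq_of_poissonCompound_eq (hnonneg g hg) (hnonneg g' hg') h
  refine ⟨hlaw, hlift.map_injective ?_⟩
  rwa [Measure.map_map hlift.measurable hg, Measure.map_map hlift.measurable hg']
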